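/- arXiv:1101.4930 — 7 statements merged into one kernel-verified Lean document; each statement's English description precedes it below -/
import Mathlib

section
/- If for each n between 1 and N the columns of the nonnegative matrix M_{n-1,n} satisfy min_i M_{n-1,n}(i,k) / max_i M_{n-1,n}(i,k) ≥ δ_n for every column k, and v, w are any two columns of the product M_{0,N} = M_{0,1}M_{1,2}⋯M_{N-1,N}, then the volume-normalized directions of v and w (normalized so that the weighted sum with fixed positive weights equals 1) differ by at most ∏_{n=1}^{N}(1-δ_n) times the diameter of the simplex of normalized nonnegative vectors. -/
/-!
Write `Q n` for the product of the first `n` matrices. The columns of `Q (n+1) = Q n * M (n+1)`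
have directions that are convex combinations of the column directions of `Q n`, with weights
`λ k m ∝ M (m, k) · mass (column m of Q n)`. The balance condition makes all these weight vectors
dominate the common vector `δ · mass / total mass`, whose total is `δ`; so, as in Doeblin's
argument, any two of the mixtures differ by at most `1 - δ` times the diameter of the column
directions of `Q n`. Induct on `n`, starting from the columns of the identity, which lie in the
normalized simplex.
-/

open Finset

/-- The volume-normalized direction of a nonnegative vector: `v` divided by `∑ i, v i * vol i`. -/
noncomputable def direction {j : ℕ} (vol : Fin j → ℝ) (v : Fin j → ℝ) : Fin j → ℝ :=
  (∑ i, v i * vol i)⁻¹ • v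

open Matrix

section Mixing

variable {ι κ E : Type*} [Fintype ι] [NormedAddCommGroup E] [NormedSpace ℝ E]

theorem norm_sum_smul_sub_sum_smul_le (u : ι → E) {p q : ι → ℝ} (hp : ∀ i, 0 ≤ p i)
    (hq : ∀ i, 0 ≤ q i) (hpq : ∑ i, p i = ∑ i, q i) :
    ‖∑ i, p i • u i - ∑ i, q i • u i‖ ≤ (∑ i, p i) * Metric.diam (Set.range u) := by
  rcases (sum_nonneg fun i _ => hp i).eq_or_lt with hzero | hpos
  · have h0 : ∀ r : ι → ℝ, (∀ i, 0 ≤ r i) → ∑ i, r i = 0 → r = 0 := fun r hr hsum =>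
      funext fun i => (sum_eq_zero_iff_of_nonneg fun i _ => hr i).1 hsum i (mem_univ i)
    simp [h0 p hp hzero.symm, h0 q hq (hpq ▸ hzero.symm)]
  · have hmem : ∀ r : ι → ℝ, (∀ i, 0 ≤ r i) → ∑ i, r i = ∑ i, p i →
        univ.centerMass r u ∈ convexHull ℝ (Set.range u) := fun r hr hsum =>
      univ.centerMass_mem_convexHull (fun i _ => hr i) (hsum ▸ hpos)
        fun i _ => Set.mem_range_self i
    have hsum : ∀ r : ι → ℝ, ∑ i, r i = ∑ i, p i →
        ∑ i, r i • u i = (∑ i, p i) • univ.centerMass r u := by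
      intro r hr
      rw [centerMass, hr, smul_inv_smul₀ hpos.ne']
    rw [hsum p rfl, hsum q hpq.symm, ← smul_sub, norm_smul, Real.norm_of_nonneg hpos.le,
      ← dist_eq_norm, ← convexHull_diam]
    gcongr
    exact Metric.dist_le_diam_of_mem (isBounded_convexHull.2 (Set.finite_range u).isBounded)
      (hmem p hp rfl) (hmem q hq hpq.symm)

theorem dist_sum_smul_le_of_minorant (u : ι → E) {w : κ → ι → ℝ} {μ : ι → ℝ}
    (hw : ∀ k, ∑ i, w k i = 1) (hμw : ∀ k i, μ i ≤ w k i) (k l : κ) :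
    dist (∑ i, w k i • u i) (∑ i, w l i • u i) ≤ (1 - ∑ i, μ i) * Metric.diam (Set.range u) := by
  have hexcess : ∀ k, ∑ i, (w k i - μ i) = 1 - ∑ i, μ i := fun k => by
    rw [sum_sub_distrib, hw]
  have hsplit : ∀ k, ∑ i, w k i • u i = ∑ i, (w k i - μ i) • u i + ∑ i, μ i • u i := fun k => by
    simp only [sub_smul, sum_sub_distrib, sub_add_cancel]
  rw [dist_eq_norm, hsplit k, hsplit l, add_sub_add_right_eq_sub, ← hexcess k]
  exact norm_sum_smul_sub_sum_smul_le u (fun i => sub_nonneg.2 (hμw k i))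
    (fun i => sub_nonneg.2 (hμw l i)) (by rw [hexcess, hexcess])

end Mixing

/-- Column-allowable, in Seneta's terminology. -/
def ColumnAllowable {m n : Type*} (A : Matrix m n ℝ) : Prop :=
  (∀ i k, 0 ≤ A i k) ∧ ∀ k, ∃ i, 0 < A i k

namespace ColumnAllowable

variable {m n o : Type*}

theorem vecMul_pos [Fintype m] {A : Matrix m n ℝ} (hA : ColumnAllowable A) {v : m → ℝ}
    (hv : ∀ i, 0 < v i) (k : n) : 0 < (v ᵥ* A) k := by
  obtain ⟨i, hi⟩ := hA.2 k
  exact sum_pos' (fun i' _ => mul_nonneg (hv i').le (hA.1 i' k)) ⟨i, mem_univ i, mul_pos (hv i) hi⟩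

theorem mul [Fintype n] {A : Matrix m n ℝ} {B : Matrix n o ℝ} (hA : ColumnAllowable A)
    (hB : ColumnAllowable B) : ColumnAllowable (A * B) := by
  refine ⟨fun i k => sum_nonneg fun p _ => mul_nonneg (hA.1 i p) (hB.1 p k), fun k => ?_⟩
  obtain ⟨p, hp⟩ := hB.2 k
  obtain ⟨i, hi⟩ := hA.2 p
  exact ⟨i, sum_pos' (fun p' _ => mul_nonneg (hA.1 i p') (hB.1 p' k))
    ⟨p, mem_univ p, mul_pos hi hp⟩⟩

theorem one [DecidableEq m] : ColumnAllowable (1 : Matrix m m ℝ) :=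
  ⟨fun i k => by by_cases h : i = k <;> simp [one_apply, h], fun k => ⟨k, by simp⟩⟩

end ColumnAllowable

section Directions

variable {j : ℕ} {ι κ : Type*}

noncomputable def columnDirection (vol : Fin j → ℝ) (A : Matrix (Fin j) ι ℝ) (k : ι) :
    Fin j → ℝ :=
  direction vol fun i => A i k

def normalizedSimplex (vol : Fin j → ℝ) : Set (Fin j → ℝ) :=
  {ρ | (∀ i, 0 ≤ ρ i) ∧ ∑ i, ρ i * vol i = 1}

theorem columnDirection_eq (vol : Fin j → ℝ) (A : Matrix (Fin j) ι ℝ) (k : ι) :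
    columnDirection vol A k = ((vol ᵥ* A) k)⁻¹ • fun i => A i k := by
  simp only [columnDirection, direction, vecMul, dotProduct, mul_comm]

theorem columnDirection_mul [Fintype ι] (vol : Fin j → ℝ) (Q : Matrix (Fin j) ι ℝ)
    (M : Matrix ι κ ℝ) (hQ : ∀ m, (vol ᵥ* Q) m ≠ 0) (k : κ) :
    columnDirection vol (Q * M) k =
      ∑ m, (M m k * (vol ᵥ* Q) m / (vol ᵥ* (Q * M)) k) • columnDirection vol Q m := by
  ext i
  simp only [columnDirection_eq, Finset.sum_apply, Pi.smul_apply, smul_eq_mul, mul_apply,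
    Finset.mul_sum]
  refine sum_congr rfl fun m _ => ?_
  field_simp [hQ m]

theorem columnDirection_mem_normalizedSimplex {vol : Fin j → ℝ} (hvol : ∀ i, 0 < vol i)
    {A : Matrix (Fin j) ι ℝ} (hA : ColumnAllowable A) (k : ι) :
    columnDirection vol A k ∈ normalizedSimplex vol := by
  have hmass := hA.vecMul_pos hvol k
  refine ⟨fun i => ?_, ?_⟩
  · rw [columnDirection_eq]
    exact mul_nonneg (inv_nonneg.2 hmass.le) (hA.1 i k)
  · simp only [columnDirection_eq, Pi.smul_apply, smul_eq_mul, mul_assoc, ← Finset.mul_sum]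
    rw [show ∑ i, A i k * vol i = (vol ᵥ* A) k by simp [vecMul, dotProduct, mul_comm],
      inv_mul_cancel₀ hmass.ne']

theorem isBounded_normalizedSimplex {vol : Fin j → ℝ} (hvol : ∀ i, 0 < vol i) :
    Bornology.IsBounded (normalizedSimplex vol) := by
  refine (Metric.isBounded_Icc (0 : Fin j → ℝ) fun i => (vol i)⁻¹).subset ?_
  rintro ρ ⟨hρ, hmass⟩
  refine ⟨hρ, fun i => ?_⟩
  change ρ i ≤ (vol i)⁻¹
  rw [← one_div, le_div_iff₀ (hvol i), ← hmass]
  exact single_le_sum (fun i' _ => mul_nonneg (hρ i') (hvol i').le) (mem_univ i)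

theorem dist_columnDirection_mul_le [Fintype ι] {vol : Fin j → ℝ} (hvol : ∀ i, 0 < vol i)
    {Q : Matrix (Fin j) ι ℝ} {M : Matrix ι κ ℝ} (hQ : ColumnAllowable Q)
    (hM : ColumnAllowable M) {δ : ℝ} (hbal : ∀ k i i', δ * M i k ≤ M i' k) (k l : κ) :
    dist (columnDirection vol (Q * M) k) (columnDirection vol (Q * M) l) ≤
      (1 - δ) * Metric.diam (Set.range (columnDirection vol Q)) := by
  set s := vol ᵥ* Q
  have hs : ∀ m, 0 < s m := hQ.vecMul_pos hvol
  have hs' : ∀ k, 0 < (s ᵥ* M) k := hM.vecMul_pos hs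
  have hS : 0 < ∑ m, s m := by
    obtain ⟨i, -⟩ := hM.2 k
    exact sum_pos (fun m _ => hs m) ⟨i, mem_univ i⟩
  have hmass : ∀ k, (s ᵥ* M) k = ∑ m, M m k * s m := fun k => by
    simp [vecMul, dotProduct, mul_comm]
  have hmass_le : ∀ k m, δ * (s ᵥ* M) k ≤ M m k * ∑ p, s p := fun k m => by
    rw [hmass, Finset.mul_sum, Finset.mul_sum]
    exact sum_le_sum fun p _ => by
      rw [← mul_assoc]
      exact mul_le_mul_of_nonneg_right (hbal k p m) (hs p).le
  have hw : ∀ k, ∑ m, M m k * s m / (s ᵥ* M) k = 1 := fun k => by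
    rw [← Finset.sum_div, ← hmass, div_self (hs' k).ne']
  have hμw : ∀ k m, δ * s m / ∑ p, s p ≤ M m k * s m / (s ᵥ* M) k := fun k m => by
    rw [div_le_div_iff₀ hS (hs' k)]
    calc δ * s m * (s ᵥ* M) k = s m * (δ * (s ᵥ* M) k) := by ring
      _ ≤ s m * (M m k * ∑ p, s p) := mul_le_mul_of_nonneg_left (hmass_le k m) (hs m).le
      _ = M m k * s m * ∑ p, s p := by ring
  have hμ : ∑ m, δ * s m / ∑ p, s p = δ := by
    rw [← Finset.sum_div, ← Finset.mul_sum, mul_div_cancel_right₀ _ hS.ne']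
  have hdoeblin := dist_sum_smul_le_of_minorant (columnDirection vol Q) hw hμw k l
  rw [hμ] at hdoeblin
  rwa [columnDirection_mul vol Q M (fun m => (hs m).ne'),
    columnDirection_mul vol Q M (fun m => (hs m).ne'), ← vecMul_vecMul]

end Directions

section Products

variable {j : ℕ} {M : ℕ → Matrix (Fin j) (Fin j) ℝ} {N : ℕ}

theorem columnAllowable_prod_range (hM : ∀ n ∈ Icc 1 N, ColumnAllowable (M n)) :
    ∀ n ≤ N, ColumnAllowable ((List.range n).map fun t => M (t + 1)).prod := by
  intro n
  induction n with
  | zero => intro _; exact ColumnAllowable.one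
  | succ n ih =>
    intro hn
    rw [List.prod_range_succ]
    exact (ih (by omega)).mul (hM (n + 1) (mem_Icc.2 ⟨by omega, hn⟩))

theorem diam_range_columnDirection_prod_le {vol : Fin j → ℝ} (hvol : ∀ i, 0 < vol i)
    (hM : ∀ n ∈ Icc 1 N, ColumnAllowable (M n)) {δ : ℕ → ℝ} (hδ : ∀ n, δ n ≤ 1)
    (hbal : ∀ n ∈ Icc 1 N, ∀ k i i', δ n * M n i k ≤ M n i' k) :
    ∀ n ≤ N, Metric.diam (Set.range (columnDirection vol
        ((List.range n).map fun t => M (t + 1)).prod)) ≤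
      (∏ t ∈ Icc 1 n, (1 - δ t)) * Metric.diam (normalizedSimplex vol) := by
  intro n
  induction n with
  | zero =>
    intro _
    simpa using Metric.diam_mono (Set.range_subset_iff.2
      (columnDirection_mem_normalizedSimplex hvol ColumnAllowable.one))
      (isBounded_normalizedSimplex hvol)
  | succ n ih =>
    intro hn
    have hn' : n + 1 ∈ Icc 1 N := mem_Icc.2 ⟨by omega, hn⟩
    have hcontr : 0 ≤ 1 - δ (n + 1) := sub_nonneg.2 (hδ (n + 1))
    rw [List.prod_range_succ, prod_Icc_succ_top (by omega)]
    refine Metric.diam_le_of_forall_dist_le (mul_nonneg (mul_nonneg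
      (prod_nonneg fun t _ => sub_nonneg.2 (hδ t)) hcontr) Metric.diam_nonneg) ?_
    rintro _ ⟨k, rfl⟩ _ ⟨l, rfl⟩
    calc _ ≤ (1 - δ (n + 1)) * Metric.diam (Set.range (columnDirection vol
            ((List.range n).map fun t => M (t + 1)).prod)) :=
          dist_columnDirection_mul_le hvol (columnAllowable_prod_range hM n (by omega))
            (hM (n + 1) hn') (hbal (n + 1) hn') k l
      _ ≤ (1 - δ (n + 1)) * ((∏ t ∈ Icc 1 n, (1 - δ t)) *
            Metric.diam (normalizedSimplex vol)) := by gcongr; exact ih (by omega)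
      _ = _ := by ring

end Products

theorem stmt_0_general (j N : ℕ)
    (vol : Fin j → ℝ) (hvol : ∀ i, 0 < vol i)
    (M : ℕ → Matrix (Fin j) (Fin j) ℝ)
    (hMnn : ∀ n ∈ Finset.Icc 1 N, ∀ i k, 0 ≤ M n i k)
    (hMcol : ∀ n ∈ Finset.Icc 1 N, ∀ k, ∃ i, 0 < M n i k)
    (δ : ℕ → ℝ) (hδ1 : ∀ n, δ n ≤ 1)
    (hbal : ∀ n ∈ Finset.Icc 1 N, ∀ k i i', δ n * M n i k ≤ M n i' k)
    (P : Matrix (Fin j) (Fin j) ℝ)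
    (hP : P = ((List.range N).map (fun t => M (t + 1))).prod)
    (k l : Fin j) :
    ‖direction vol (fun i => P i k) - direction vol (fun i => P i l)‖ ≤
      (∏ n ∈ Finset.Icc 1 N, (1 - δ n)) *
        Metric.diam {ρ : Fin j → ℝ | (∀ i, 0 ≤ ρ i) ∧ ∑ i, ρ i * vol i = 1} := by
  have hM : ∀ n ∈ Icc 1 N, ColumnAllowable (M n) := fun n hn => ⟨hMnn n hn, hMcol n hn⟩
  subst hP
  rw [← dist_eq_norm]
  exact (Metric.dist_le_diam_of_mem (Set.finite_range (columnDirection vol _)).isBounded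
    (Set.mem_range_self k) (Set.mem_range_self l)).trans
    (diam_range_columnDirection_prod_le hvol hM hδ1 hbal N le_rfl)

theorem stmt_0 (j N : ℕ) (hj : 0 < j) (hN : 0 < N)
    (vol : Fin j → ℝ) (hvol : ∀ i, 0 < vol i)
    (M : ℕ → Matrix (Fin j) (Fin j) ℝ)
    (hMnn : ∀ n ∈ Finset.Icc 1 N, ∀ i k, 0 ≤ M n i k)
    (hMcol : ∀ n ∈ Finset.Icc 1 N, ∀ k, ∃ i, 0 < M n i k)
    (δ : ℕ → ℝ) (hδ0 : ∀ n, 0 ≤ δ n) (hδ1 : ∀ n, δ n ≤ 1)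
    (hbal : ∀ n ∈ Finset.Icc 1 N, ∀ k i i', δ n * M n i k ≤ M n i' k)
    (P : Matrix (Fin j) (Fin j) ℝ)
    (hP : P = ((List.range N).map (fun t => M (t + 1))).prod)
    (k l : Fin j) :
    ‖direction vol (fun i => P i k) - direction vol (fun i => P i l)‖ ≤
      (∏ n ∈ Finset.Icc 1 N, (1 - δ n)) *
        Metric.diam {ρ : Fin j → ℝ | (∀ i, 0 ≤ ρ i) ∧ ∑ i, ρ i * vol i = 1} :=
  stmt_0_general j N vol hvol M hMnn hMcol δ hδ1 hbal P hP k l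
end

section
/- Let (M_n)_{n≥1} be a sequence of square nonnegative integer matrices of size j×j, each with all entries between 1 and K for some fixed K ≥ 1. Then for each fixed n, the sequence of direction matrices D_{n,N} obtained by volume-normalizing the columns of M_{n+1}M_{n+2}⋯M_N converges, as N → ∞, to a rank-one matrix: all columns of D_{n,N} converge to a common limit vector d_n. -/
open Finset Filter

lemma key_contraction {j : ℕ} (hj : 0 < j) (ε : ℝ) (hε : 0 < ε)
    (D : ℕ → Fin j → Fin j → ℝ) (w : ℕ → Fin j → Fin j → ℝ)
    (hw : ∀ m k p, ε ≤ w m k p) (hw1 : ∀ m k, ∑ p, w m k p = 1)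
    (hrec : ∀ m k i, D (m + 1) k i = ∑ p, w m k p * D m p i) :
    ∃ d : Fin j → ℝ, ∀ k, Tendsto (fun m => D m k) atTop (nhds d) := by
  haveI : Nonempty (Fin j) := ⟨⟨0, hj⟩⟩
  set mn : ℕ → Fin j → ℝ := fun m i => univ.inf' univ_nonempty (fun k => D m k i) with hmn
  set mx : ℕ → Fin j → ℝ := fun m i => univ.sup' univ_nonempty (fun k => D m k i) with hmx
  have hmnle : ∀ m i k, mn m i ≤ D m k i := fun m i k => inf'_le (fun k => D m k i) (mem_univ k)
  have hlemx : ∀ m i k, D m k i ≤ mx m i := fun m i k => le_sup' (fun k => D m k i) (mem_univ k)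
  have hmnmx : ∀ m i, mn m i ≤ mx m i := fun m i => (hmnle m i ⟨0, hj⟩).trans (hlemx m i _)
  have hwnn : ∀ m k p, 0 ≤ w m k p := fun m k p => hε.le.trans (hw m k p)
  have hub : ∀ m k i, D (m + 1) k i ≤ mx m i - ε * (mx m i - mn m i) := by
    intro m k i
    obtain ⟨p0, -, hp0⟩ := exists_mem_eq_inf' (univ_nonempty) (fun k => D m k i)
    have hp0' : mn m i = D m p0 i := hp0
    have h1 : ε * (mx m i - mn m i) ≤ ∑ p, w m k p * (mx m i - D m p i) := by
      calc ε * (mx m i - mn m i) ≤ w m k p0 * (mx m i - D m p0 i) := by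
            rw [← hp0']
            exact mul_le_mul (hw m k p0) le_rfl (by linarith [hmnmx m i]) (hwnn m k p0)
        _ ≤ ∑ p, w m k p * (mx m i - D m p i) :=
            Finset.single_le_sum (f := fun p => w m k p * (mx m i - D m p i))
              (fun p _ => mul_nonneg (hwnn m k p) (by linarith [hlemx m i p])) (mem_univ p0)
    have h2 : D (m + 1) k i = mx m i - ∑ p, w m k p * (mx m i - D m p i) := by
      rw [hrec]
      have h3 : ∑ p, w m k p * (mx m i - D m p i)
          = (∑ p, w m k p) * mx m i - ∑ p, w m k p * D m p i := by
        rw [Finset.sum_mul, ← Finset.sum_sub_distrib]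
        exact Finset.sum_congr rfl fun p _ => by ring
      rw [h3, hw1]; ring
    linarith
  have hlb : ∀ m k i, mn m i + ε * (mx m i - mn m i) ≤ D (m + 1) k i := by
    intro m k i
    obtain ⟨p0, -, hp0⟩ := exists_mem_eq_sup' (univ_nonempty) (fun k => D m k i)
    have hp0' : mx m i = D m p0 i := hp0
    have h1 : ε * (mx m i - mn m i) ≤ ∑ p, w m k p * (D m p i - mn m i) := by
      calc ε * (mx m i - mn m i) ≤ w m k p0 * (D m p0 i - mn m i) := by
            rw [← hp0']
            exact mul_le_mul (hw m k p0) le_rfl (by linarith [hmnmx m i]) (hwnn m k p0)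
        _ ≤ ∑ p, w m k p * (D m p i - mn m i) :=
            Finset.single_le_sum (f := fun p => w m k p * (D m p i - mn m i))
              (fun p _ => mul_nonneg (hwnn m k p) (by linarith [hmnle m i p])) (mem_univ p0)
    have h2 : D (m + 1) k i = mn m i + ∑ p, w m k p * (D m p i - mn m i) := by
      rw [hrec]
      have h3 : ∑ p, w m k p * (D m p i - mn m i)
          = (∑ p, w m k p * D m p i) - (∑ p, w m k p) * mn m i := by
        rw [Finset.sum_mul, ← Finset.sum_sub_distrib]
        exact Finset.sum_congr rfl fun p _ => by ring
      rw [h3, hw1]; ring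
    linarith
  have hmx_step : ∀ m i, mx (m + 1) i ≤ mx m i - ε * (mx m i - mn m i) := fun m i =>
    Finset.sup'_le _ _ fun k _ => hub m k i
  have hmn_step : ∀ m i, mn m i + ε * (mx m i - mn m i) ≤ mn (m + 1) i := fun m i =>
    Finset.le_inf' _ _ fun k _ => hlb m k i
  set c : ℝ := max (1 - 2 * ε) 0 with hc
  have hc0 : 0 ≤ c := le_max_right _ _
  have hc1 : c < 1 := max_lt (by linarith) one_pos
  have hosc : ∀ m i, mx (m + 1) i - mn (m + 1) i ≤ c * (mx m i - mn m i) := by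
    intro m i
    have h1 := hmx_step m i
    have h2 := hmn_step m i
    have h3 : (1 - 2 * ε) * (mx m i - mn m i)
        = (mx m i - mn m i) - 2 * (ε * (mx m i - mn m i)) := by ring
    have h4 : (1 - 2 * ε) * (mx m i - mn m i) ≤ c * (mx m i - mn m i) :=
      mul_le_mul_of_nonneg_right (le_max_left _ _) (by linarith [hmnmx m i])
    linarith
  have hoscgeo : ∀ i m, mx m i - mn m i ≤ (mx 0 i - mn 0 i) * c ^ m := by
    intro i m
    induction m with
    | zero => simp
    | succ m ih =>
      calc mx (m + 1) i - mn (m + 1) i ≤ c * (mx m i - mn m i) := hosc m i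
        _ ≤ c * ((mx 0 i - mn 0 i) * c ^ m) := mul_le_mul_of_nonneg_left ih hc0
        _ = (mx 0 i - mn 0 i) * c ^ (m + 1) := by ring
  have htend0 : ∀ i, Tendsto (fun m => mx m i - mn m i) atTop (nhds 0) := by
    intro i
    have hgeo : Tendsto (fun m : ℕ => (mx 0 i - mn 0 i) * c ^ m) atTop (nhds 0) := by
      simpa using (tendsto_pow_atTop_nhds_zero_of_lt_one hc0 hc1).const_mul (mx 0 i - mn 0 i)
    exact tendsto_of_tendsto_of_tendsto_of_le_of_le tendsto_const_nhds hgeo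
      (fun m => by linarith [hmnmx m i]) (fun m => hoscgeo i m)
  have hmn_mono : ∀ i, Monotone fun m => mn m i := by
    intro i
    apply monotone_nat_of_le_succ
    intro m
    have := hmn_step m i
    have := mul_nonneg hε.le (sub_nonneg.2 (hmnmx m i))
    linarith
  have hmx_anti : ∀ i, Antitone fun m => mx m i := by
    intro i
    apply antitone_nat_of_succ_le
    intro m
    have := hmx_step m i
    have := mul_nonneg hε.le (sub_nonneg.2 (hmnmx m i))
    linarith
  have hbdd : ∀ i, BddAbove (Set.range fun m => mn m i) := by
    intro i
    refine ⟨mx 0 i, ?_⟩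
    rintro x ⟨m, rfl⟩
    exact (hmnmx m i).trans (hmx_anti i (Nat.zero_le m))
  have hL : ∀ i, Tendsto (fun m => mn m i) atTop (nhds (⨆ m, mn m i)) := fun i =>
    tendsto_atTop_ciSup (hmn_mono i) (hbdd i)
  have hMx : ∀ i, Tendsto (fun m => mx m i) atTop (nhds (⨆ m, mn m i)) := by
    intro i
    have h := (hL i).add (htend0 i)
    rw [add_zero] at h
    exact h.congr fun m => by ring
  refine ⟨fun i => ⨆ m, mn m i, fun k => ?_⟩
  rw [tendsto_pi_nhds]
  intro i
  exact tendsto_of_tendsto_of_tendsto_of_le_of_le (hL i) (hMx i)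
    (fun m => hmnle m i k) (fun m => hlemx m i k)


theorem stmt_1 (j K : ℕ) (hj : 0 < j) (hK : 1 ≤ K)
    (vol : Fin j → ℝ) (hvol : ∀ i, 0 < vol i)
    (M : ℕ → Matrix (Fin j) (Fin j) ℕ)
    (hM : ∀ n i k, 1 ≤ M n i k ∧ M n i k ≤ K)
    (n : ℕ) :
    ∃ d : Fin j → ℝ, ∀ k : Fin j,
      Tendsto
        (fun N => direction vol (fun i =>
          (((List.Ico (n + 1) (N + 1)).map (fun t => (M t).map ((↑) : ℕ → ℝ))).prod) i k))
        atTop (nhds d) := by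
  haveI : Nonempty (Fin j) := ⟨⟨0, hj⟩⟩
  set A : ℕ → Matrix (Fin j) (Fin j) ℝ := fun t => (M t).map ((↑) : ℕ → ℝ) with hA
  set E : ℕ → Matrix (Fin j) (Fin j) ℝ := fun m => ((List.Ico (n + 1) (n + 2 + m)).map A).prod
    with hE
  have hA1 : ∀ t p q, (1 : ℝ) ≤ A t p q := by
    intro t p q
    simp only [hA, Matrix.map_apply]
    exact_mod_cast (hM t p q).1
  have hAK : ∀ t p q, A t p q ≤ (K : ℝ) := by
    intro t p q
    simp only [hA, Matrix.map_apply]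
    exact_mod_cast (hM t p q).2
  have hE0 : E 0 = A (n + 1) := by
    simp only [hE]
    norm_num [List.Ico.succ_singleton]
  have hErec : ∀ m, E (m + 1) = E m * A (n + 2 + m) := by
    intro m
    have h : List.Ico (n + 1) (n + 2 + (m + 1)) = List.Ico (n + 1) (n + 2 + m) ++ [n + 2 + m] := by
      have h2 : n + 2 + (m + 1) = (n + 2 + m) + 1 := by omega
      rw [h2, List.Ico.succ_top (by omega)]
    simp only [hE, h, List.map_append, List.prod_append, List.map_singleton,
      List.prod_singleton]
  have hE1 : ∀ m i k, (1 : ℝ) ≤ E m i k := by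
    intro m
    induction m with
    | zero => intro i k; rw [hE0]; exact hA1 _ i k
    | succ m ih =>
      intro i k
      rw [hErec, Matrix.mul_apply]
      calc (1 : ℝ) = 1 * 1 := by ring
        _ ≤ E m i ⟨0, hj⟩ * A (n + 2 + m) ⟨0, hj⟩ k :=
            mul_le_mul (ih i _) (hA1 _ _ _) zero_le_one (zero_le_one.trans (ih i _))
        _ ≤ ∑ p, E m i p * A (n + 2 + m) p k :=
            Finset.single_le_sum (f := fun p => E m i p * A (n + 2 + m) p k)
              (fun p _ => mul_nonneg (zero_le_one.trans (ih i p))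
                (zero_le_one.trans (hA1 _ _ _))) (mem_univ _)
  have hEK : ∀ m i k k', E m i k ≤ (K : ℝ) * E m i k' := by
    intro m i k k'
    cases m with
    | zero =>
      rw [hE0]
      have h1 : (1 : ℝ) ≤ (K : ℝ) := by exact_mod_cast hK
      nlinarith [hA1 (n + 1) i k', hAK (n + 1) i k]
    | succ m =>
      simp only [hErec, Matrix.mul_apply]
      rw [Finset.mul_sum]
      refine Finset.sum_le_sum fun p _ => ?_
      have hEnn : (0 : ℝ) ≤ E m i p := zero_le_one.trans (hE1 m i p)
      have hKnn : (0 : ℝ) ≤ (K : ℝ) := Nat.cast_nonneg K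
      calc E m i p * A (n + 2 + m) p k ≤ E m i p * (K : ℝ) :=
            mul_le_mul_of_nonneg_left (hAK _ _ _) hEnn
        _ = (K : ℝ) * (E m i p * 1) := by ring
        _ ≤ (K : ℝ) * (E m i p * A (n + 2 + m) p k') :=
            mul_le_mul_of_nonneg_left (mul_le_mul_of_nonneg_left (hA1 _ _ _) hEnn) hKnn
  set S : ℕ → Fin j → ℝ := fun m k => ∑ i, E m i k * vol i with hS
  have hSpos : ∀ m k, 0 < S m k := by
    intro m k
    refine Finset.sum_pos (fun i _ => mul_pos ?_ (hvol i)) univ_nonempty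
    linarith [hE1 m i k]
  have hSK : ∀ m k k', S m k ≤ (K : ℝ) * S m k' := by
    intro m k k'
    rw [hS]
    simp only
    rw [Finset.mul_sum]
    refine Finset.sum_le_sum fun i _ => ?_
    have := hEK m i k k'
    nlinarith [hvol i]
  have hSrec : ∀ m k, S (m + 1) k = ∑ p, A (n + 2 + m) p k * S m p := by
    intro m k
    simp only [hS, hErec, Matrix.mul_apply, Finset.sum_mul]
    rw [Finset.sum_comm]
    refine Finset.sum_congr rfl fun p _ => ?_
    rw [Finset.mul_sum]
    refine Finset.sum_congr rfl fun i _ => by ring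
  set w : ℕ → Fin j → Fin j → ℝ := fun m k p => A (n + 2 + m) p k * S m p / S (m + 1) k with hw
  have hw1 : ∀ m k, ∑ p, w m k p = 1 := by
    intro m k
    simp only [hw]
    rw [← Finset.sum_div, ← hSrec, div_self (hSpos (m + 1) k).ne']
  have hKpos : (0 : ℝ) < K := by exact_mod_cast hK
  have hjpos : (0 : ℝ) < j := by exact_mod_cast hj
  set ε : ℝ := ((j : ℝ) * (K : ℝ) ^ 2)⁻¹ with hε
  have hεpos : 0 < ε := by rw [hε]; positivity
  have hwge : ∀ m k p, ε ≤ w m k p := by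
    intro m k p
    have hS' : S (m + 1) k ≤ (j : ℝ) * (K : ℝ) ^ 2 * S m p := by
      rw [hSrec]
      calc ∑ q, A (n + 2 + m) q k * S m q ≤ ∑ _q : Fin j, (K : ℝ) * ((K : ℝ) * S m p) :=
            Finset.sum_le_sum fun q _ => mul_le_mul (hAK _ _ _) (hSK m q p)
              (hSpos m q).le hKpos.le
        _ = (j : ℝ) * (K : ℝ) ^ 2 * S m p := by
            rw [Finset.sum_const, card_univ, Fintype.card_fin, nsmul_eq_mul]; ring
    rw [hw]
    simp only
    rw [le_div_iff₀ (hSpos (m + 1) k)]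
    calc ε * S (m + 1) k ≤ ε * ((j : ℝ) * (K : ℝ) ^ 2 * S m p) :=
          mul_le_mul_of_nonneg_left hS' hεpos.le
      _ = S m p := by
          rw [hε, ← mul_assoc, inv_mul_cancel₀ (by positivity), one_mul]
      _ ≤ A (n + 2 + m) p k * S m p :=
          le_mul_of_one_le_left (hSpos m p).le (hA1 _ _ _)
  have hDi : ∀ m k i, direction vol (fun i' => E m i' k) i = (S m k)⁻¹ * E m i k := by
    intro m k i
    simp only [direction, Pi.smul_apply, smul_eq_mul, hS]
  have hrec : ∀ m k i, direction vol (fun i' => E (m + 1) i' k) i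
      = ∑ p, w m k p * direction vol (fun i' => E m i' p) i := by
    intro m k i
    simp only [hDi]
    rw [hErec, Matrix.mul_apply, Finset.mul_sum]
    refine Finset.sum_congr rfl fun p _ => ?_
    simp only [hw]
    have h1 := (hSpos m p).ne'
    have h2 := (hSpos (m + 1) k).ne'
    field_simp
  obtain ⟨d, hd⟩ := key_contraction hj ε hεpos
    (fun m k => direction vol (fun i => E m i k)) w hwge hw1 hrec
  refine ⟨d, fun k => ?_⟩
  have h2 := (hd k).comp (tendsto_sub_atTop_nat (n + 1))
  refine Filter.Tendsto.congr' ?_ h2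
  filter_upwards [eventually_ge_atTop (n + 1)] with N hN
  have hPE : E (N - (n + 1)) = ((List.Ico (n + 1) (N + 1)).map A).prod := by
    simp only [hE]
    have : n + 2 + (N - (n + 1)) = N + 1 := by omega
    rw [this]
  simp only [Function.comp]
  rw [hPE]
end

section
/- If ∑_n δ_n diverges, where δ_n = min_k (min_i M_{n-1,n}(i,k))/(max_i M_{n-1,n}(i,k)) for a sequence of nonnegative matrices M_{n-1,n}, then δ_n > 0 for infinitely many n, and the infinite product ∏_{k>n}(1-δ_k) equals 0 for every n; consequently, for each n the nested convex sets Δ_{n,N} (convex hulls of the volume-normalized columns of M_{n,N} = M_{n,n+1}⋯M_{N-1,N}) shrink to a single point as N → ∞. -/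
/-!
Write `M_{n,N+1} = M_{n,N} M_{N,N+1}`. Each normalized column of the product is a convex
combination of the normalized columns of `M_{n,N}`, and the balance condition forces every such
combination to put weight at least `δ_{N+1}` times one and the same probability vector (the
normalized column masses of `M_{n,N}`) on each vertex. Hence `Δ_{n,N+1} ⊆ Δ_{n,N}` and the
diameter contracts by the factor `1 - δ_{N+1}`. Since `∏ (1 - δ_k) ≤ exp (-∑ δ_k) → 0`, the
diameters tend to `0`, and Cantor's intersection theorem leaves exactly one point.
-/

open Finset Filter

open Topology Metric Matrix

theorem infinite_setOf_pos_of_not_summable {α : Type*} {f : α → ℝ} (hf : ∀ n, 0 ≤ f n)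
    (h : ¬ Summable f) : {n | 0 < f n}.Infinite := by
  refine fun hfin => h (summable_of_ne_finset_zero (s := hfin.toFinset) fun n hn => ?_)
  simp only [Set.Finite.mem_toFinset, Set.mem_ofPred_eq, not_lt] at hn
  exact hn.antisymm (hf n)

theorem tendsto_prod_Ico_one_sub_of_not_summable {f : ℕ → ℝ} (hf0 : ∀ n, 0 ≤ f n)
    (hf1 : ∀ n, f n ≤ 1) (h : ¬ Summable f) (n : ℕ) :
    Tendsto (fun N => ∏ k ∈ Ico n N, (1 - f k)) atTop (𝓝 0) := by
  have hsum : Tendsto (fun N => ∑ k ∈ Ico n N, f k) atTop atTop := by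
    refine (tendsto_atTop_add_const_right _ (-∑ k ∈ range n, f k)
      ((not_summable_iff_tendsto_nat_atTop_of_nonneg hf0).1 h)).congr' ?_
    filter_upwards [eventually_ge_atTop n] with N hN
    rw [sum_Ico_eq_sub _ hN, sub_eq_add_neg]
  refine squeeze_zero (fun N => prod_nonneg fun k _ => sub_nonneg.2 (hf1 k)) (fun N => ?_)
    (Real.tendsto_exp_neg_atTop_nhds_zero.comp hsum)
  calc ∏ k ∈ Ico n N, (1 - f k) ≤ ∏ k ∈ Ico n N, Real.exp (-f k) :=
        prod_le_prod (fun k _ => sub_nonneg.2 (hf1 k)) fun k _ => Real.one_sub_le_exp_neg _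
    _ = Real.exp (-∑ k ∈ Ico n N, f k) := by rw [← Real.exp_sum, sum_neg_distrib]

theorem exists_iInter_eq_singleton_of_tendsto_diam {X : Type*} [MetricSpace X] {K : ℕ → Set X}
    (hK : Antitone K) (hne : ∀ m, (K m).Nonempty) (hcpt : ∀ m, IsCompact (K m))
    (hdiam : Tendsto (fun m => diam (K m)) atTop (𝓝 0)) : ∃ p, ⋂ m, K m = {p} := by
  obtain ⟨p, hp⟩ := IsCompact.nonempty_iInter_of_sequence_nonempty_isCompact_isClosed K
    (fun m => hK m.le_succ) hne (hcpt 0) fun m => (hcpt m).isClosed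
  refine ⟨p, Set.Subsingleton.eq_singleton_of_mem (fun x hx y hy => ?_) hp⟩
  rw [← dist_le_zero]
  refine ge_of_tendsto' hdiam fun m => ?_
  exact dist_le_diam_of_mem (hcpt m).isBounded (Set.mem_iInter.1 hx m) (Set.mem_iInter.1 hy m)

section ConvexCombination

variable {E ι : Type*} [NormedAddCommGroup E] [NormedSpace ℝ E] [Fintype ι]

theorem dist_sum_smul_le_sum_mul_diam (d : ι → E) {s s' : ι → ℝ} (hs : ∀ l, 0 ≤ s l)
    (hs' : ∀ l, 0 ≤ s' l) (hss' : ∑ l, s l = ∑ l, s' l) :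
    dist (∑ l, s l • d l) (∑ l, s' l • d l) ≤ (∑ l, s l) * diam (Set.range d) := by
  rcases (sum_nonneg fun l _ => hs l).eq_or_lt with hm | hm
  · have h0 : ∀ w : ι → ℝ, (∀ l, 0 ≤ w l) → ∑ l, w l = 0 → ∑ l, w l • d l = 0 := fun w hw hw0 =>
      sum_eq_zero fun l _ => by
        rw [(sum_eq_zero_iff_of_nonneg fun l _ => hw l).1 hw0 l (mem_univ l), zero_smul]
    rw [h0 s hs hm.symm, h0 s' hs' (hss' ▸ hm.symm), dist_self, ← hm, zero_mul]
  · have hcm : ∀ w : ι → ℝ, ∑ l, w l ≠ 0 → ∑ l, w l • d l = (∑ l, w l) • univ.centerMass w d :=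
      fun w hw => (smul_inv_smul₀ hw _).symm
    have hmem : ∀ w : ι → ℝ, (∀ l, 0 ≤ w l) → 0 < ∑ l, w l →
        univ.centerMass w d ∈ convexHull ℝ (Set.range d) := fun w hw hw0 =>
      univ.centerMass_mem_convexHull (fun l _ => hw l) hw0 fun l _ => Set.mem_range_self l
    rw [hcm s hm.ne', hcm s' (hss' ▸ hm.ne'), ← hss', dist_smul₀, Real.norm_of_nonneg hm.le,
      ← convexHull_diam]
    gcongr
    exact dist_le_diam_of_mem (isBounded_convexHull.2 (Set.finite_range d).isBounded)
      (hmem s hs hm) (hmem s' hs' (hss' ▸ hm))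

/-- Two convex combinations that both put weight at least `δ * u` on each point have the common
part `δ * u` cancel, leaving total weight `1 - δ`. -/
theorem dist_sum_smul_le_one_sub_mul_diam (d : ι → E) {t t' u : ι → ℝ} {δ : ℝ}
    (ht : ∑ l, t l = 1) (ht' : ∑ l, t' l = 1) (hu : ∑ l, u l = 1)
    (htu : ∀ l, δ * u l ≤ t l) (ht'u : ∀ l, δ * u l ≤ t' l) :
    dist (∑ l, t l • d l) (∑ l, t' l • d l) ≤ (1 - δ) * diam (Set.range d) := by
  have hsum : ∀ w : ι → ℝ, ∑ l, w l = 1 → ∑ l, (w l - δ * u l) = 1 - δ := fun w hw => by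
    rw [sum_sub_distrib, ← mul_sum, hw, hu, mul_one]
  have key := dist_sum_smul_le_sum_mul_diam d (fun l => sub_nonneg.2 (htu l))
    (fun l => sub_nonneg.2 (ht'u l)) ((hsum t ht).trans (hsum t' ht').symm)
  simpa only [hsum t ht, sub_smul, sum_sub_distrib, dist_sub_right] using key

end ConvexCombination

section Direction

variable {j : ℕ} (vol : Fin j → ℝ)

theorem direction_eq_inv_dotProduct_smul (v : Fin j → ℝ) : direction vol v = (v ⬝ᵥ vol)⁻¹ • v :=
  rfl

theorem direction_dotProduct {v : Fin j → ℝ} (hv : v ⬝ᵥ vol ≠ 0) : direction vol v ⬝ᵥ vol = 1 := by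
  rw [direction_eq_inv_dotProduct_smul, smul_dotProduct, smul_eq_mul, inv_mul_cancel₀ hv]

theorem dotProduct_smul_direction {v : Fin j → ℝ} (hv : v ⬝ᵥ vol ≠ 0) :
    (v ⬝ᵥ vol) • direction vol v = v := by
  rw [direction_eq_inv_dotProduct_smul, smul_inv_smul₀ hv]

theorem direction_sum_smul {ι : Type*} [Fintype ι] {x : ι → Fin j → ℝ} (hx : ∀ l, x l ⬝ᵥ vol = 1)
    (w : ι → ℝ) : direction vol (∑ l, w l • x l) = ∑ l, (w l / ∑ l', w l') • x l := by
  have hmass : (∑ l, w l • x l) ⬝ᵥ vol = ∑ l, w l := by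
    simp only [sum_dotProduct, smul_dotProduct, hx, smul_eq_mul, mul_one]
  simp only [direction_eq_inv_dotProduct_smul, hmass, smul_sum, smul_smul, div_eq_inv_mul]

end Direction

/-- `Δ_{n,N}` of the paper is `normalizedColumnHull vol (M_{n,N})`. -/
def normalizedColumnHull {j : ℕ} {ι : Type*} (vol : Fin j → ℝ) (A : Matrix (Fin j) ι ℝ) :
    Set (Fin j → ℝ) :=
  convexHull ℝ (Set.range fun k => direction vol (Aᵀ k))

section ColumnHull

variable {j : ℕ} (vol : Fin j → ℝ) {ι κ : Type*} [Fintype ι]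

theorem dotProduct_pos_of_nonneg_of_exists_pos {v w : ι → ℝ} (hv : ∀ i, 0 ≤ v i)
    (hv' : ∃ i, 0 < v i) (hw : ∀ i, 0 < w i) : 0 < v ⬝ᵥ w := by
  obtain ⟨i, hi⟩ := hv'
  exact sum_pos' (fun i _ => mul_nonneg (hv i) (hw i).le) ⟨i, mem_univ i, mul_pos hi (hw i)⟩

theorem isCompact_normalizedColumnHull [Finite κ] (A : Matrix (Fin j) κ ℝ) :
    IsCompact (normalizedColumnHull vol A) :=
  (Set.finite_range _).isCompact_convexHull (𝕜 := ℝ)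

theorem normalizedColumnHull_nonempty [Nonempty κ] (A : Matrix (Fin j) κ ℝ) :
    (normalizedColumnHull vol A).Nonempty :=
  (Set.range_nonempty _).convexHull

theorem transpose_mul_apply_eq_sum (A : Matrix (Fin j) ι ℝ) (B : Matrix ι κ ℝ) (k : κ) :
    (A * B)ᵀ k = ∑ l, B l k • Aᵀ l := by
  ext i
  simp [mul_apply, mul_comm]

theorem transpose_mul_apply_dotProduct (A : Matrix (Fin j) ι ℝ) (B : Matrix ι κ ℝ) (k : κ) :
    (A * B)ᵀ k ⬝ᵥ vol = ∑ l, B l k * (Aᵀ l ⬝ᵥ vol) := by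
  simp only [transpose_mul_apply_eq_sum, sum_dotProduct, smul_dotProduct, smul_eq_mul]

variable {A : Matrix (Fin j) ι ℝ} {B : Matrix ι κ ℝ}

theorem direction_transpose_mul_apply (hA : ∀ l, Aᵀ l ⬝ᵥ vol ≠ 0) (k : κ) :
    direction vol ((A * B)ᵀ k) = ∑ l, (B l k * (Aᵀ l ⬝ᵥ vol) / (A * B)ᵀ k ⬝ᵥ vol) •
      direction vol (Aᵀ l) := by
  have hcol : (A * B)ᵀ k = ∑ l, (B l k * (Aᵀ l ⬝ᵥ vol)) • direction vol (Aᵀ l) := by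
    simp_rw [transpose_mul_apply_eq_sum, ← smul_smul, dotProduct_smul_direction vol (hA _)]
  rw [transpose_mul_apply_dotProduct, hcol]
  exact direction_sum_smul vol (fun l => direction_dotProduct vol (hA l)) _

theorem transpose_mul_apply_dotProduct_pos (hA : ∀ l, 0 < Aᵀ l ⬝ᵥ vol) (hB0 : ∀ l k, 0 ≤ B l k)
    (hB : ∀ k, ∃ l, 0 < B l k) (k : κ) : 0 < (A * B)ᵀ k ⬝ᵥ vol := by
  rw [transpose_mul_apply_dotProduct]
  exact dotProduct_pos_of_nonneg_of_exists_pos (fun l => hB0 l k) (hB k) hA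

theorem normalizedColumnHull_mul_subset (hA : ∀ l, 0 < Aᵀ l ⬝ᵥ vol) (hB0 : ∀ l k, 0 ≤ B l k)
    (hB : ∀ k, ∃ l, 0 < B l k) : normalizedColumnHull vol (A * B) ⊆ normalizedColumnHull vol A := by
  refine convexHull_min ?_ (convex_convexHull ℝ _)
  rintro _ ⟨k, rfl⟩
  have hT := transpose_mul_apply_dotProduct_pos vol hA hB0 hB k
  dsimp only
  rw [direction_transpose_mul_apply vol fun l => (hA l).ne']
  refine (convex_convexHull ℝ _).sum_mem
    (fun l _ => div_nonneg (mul_nonneg (hB0 l k) (hA l).le) hT.le) ?_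
    fun l _ => subset_convexHull ℝ _ ⟨l, rfl⟩
  rw [← sum_div, ← transpose_mul_apply_dotProduct, div_self hT.ne']

theorem diam_normalizedColumnHull_mul_le [Nonempty ι] {δ : ℝ} (hδ : δ ≤ 1)
    (hA : ∀ l, 0 < Aᵀ l ⬝ᵥ vol) (hB0 : ∀ l k, 0 ≤ B l k) (hB : ∀ k, ∃ l, 0 < B l k)
    (hbal : ∀ k l l', δ * B l k ≤ B l' k) :
    diam (normalizedColumnHull vol (A * B)) ≤ (1 - δ) * diam (normalizedColumnHull vol A) := by
  set s : ι → ℝ := fun l => Aᵀ l ⬝ᵥ vol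
  have hS : 0 < ∑ l, s l := sum_pos (fun l _ => hA l) univ_nonempty
  have hT := transpose_mul_apply_dotProduct_pos vol hA hB0 hB
  have hw1 : ∀ k, ∑ l, B l k * s l / (A * B)ᵀ k ⬝ᵥ vol = 1 := fun k => by
    rw [← sum_div, ← transpose_mul_apply_dotProduct, div_self (hT k).ne']
  have hwu : ∀ k l, δ * (s l / ∑ l', s l') ≤ B l k * s l / (A * B)ᵀ k ⬝ᵥ vol := fun k l => by
    have hδT : δ * ((A * B)ᵀ k ⬝ᵥ vol) ≤ B l k * ∑ l', s l' := by
      rw [transpose_mul_apply_dotProduct, mul_sum, mul_sum]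
      exact sum_le_sum fun l' _ => by
        rw [← mul_assoc]; exact mul_le_mul_of_nonneg_right (hbal k l' l) (hA l').le
    rw [mul_div_assoc', div_le_div_iff₀ hS (hT k)]
    nlinarith [(hA l).le]
  rw [normalizedColumnHull, normalizedColumnHull, convexHull_diam, convexHull_diam]
  refine diam_le_of_forall_dist_le (mul_nonneg (sub_nonneg.2 hδ) diam_nonneg) ?_
  rintro _ ⟨k, rfl⟩ _ ⟨k', rfl⟩
  dsimp only
  rw [direction_transpose_mul_apply vol (fun l => (hA l).ne') k,
    direction_transpose_mul_apply vol (fun l => (hA l).ne') k']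
  exact dist_sum_smul_le_one_sub_mul_diam _ (hw1 k) (hw1 k') (by rw [← sum_div, div_self hS.ne'])
    (hwu k) (hwu k')

end ColumnHull

theorem exists_iInter_normalizedColumnHull_eq_singleton {j : ℕ} (vol : Fin j → ℝ) {ι : Type*}
    [Fintype ι] [Nonempty ι] {A : ℕ → Matrix (Fin j) ι ℝ} {B : ℕ → Matrix ι ι ℝ} {δ : ℕ → ℝ}
    (hAB : ∀ m, A (m + 1) = A m * B m) (hA0 : ∀ l, 0 < (A 0)ᵀ l ⬝ᵥ vol)
    (hB0 : ∀ m l k, 0 ≤ B m l k) (hB : ∀ m k, ∃ l, 0 < B m l k) (hδ : ∀ m, δ m ≤ 1)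
    (hbal : ∀ m k l l', δ m * B m l k ≤ B m l' k)
    (hprod : Tendsto (fun m => ∏ k ∈ range m, (1 - δ k)) atTop (𝓝 0)) :
    ∃ p, ⋂ m, normalizedColumnHull vol (A m) = {p} := by
  have hA : ∀ m l, 0 < (A m)ᵀ l ⬝ᵥ vol := by
    intro m
    induction m with
    | zero => exact hA0
    | succ m ih => rw [hAB]; exact transpose_mul_apply_dotProduct_pos vol ih (hB0 m) (hB m)
  have hdiam : ∀ m, diam (normalizedColumnHull vol (A m)) ≤
      (∏ k ∈ range m, (1 - δ k)) * diam (normalizedColumnHull vol (A 0)) := by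
    intro m
    induction m with
    | zero => simp
    | succ m ih =>
      rw [hAB, prod_range_succ, mul_comm _ (1 - δ m), mul_assoc]
      exact (diam_normalizedColumnHull_mul_le vol (hδ m) (hA m) (hB0 m) (hB m) (hbal m)).trans
        (mul_le_mul_of_nonneg_left ih (sub_nonneg.2 (hδ m)))
  refine exists_iInter_eq_singleton_of_tendsto_diam (antitone_nat_of_succ_le fun m => ?_)
    (fun _ => normalizedColumnHull_nonempty vol _) (fun _ => isCompact_normalizedColumnHull vol _)
    ?_
  · rw [hAB]
    exact normalizedColumnHull_mul_subset vol (hA m) (hB0 m) (hB m)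
  · refine squeeze_zero (fun m => diam_nonneg) hdiam ?_
    simpa using hprod.mul_const (diam (normalizedColumnHull vol (A 0)))

theorem stmt_2 (j : ℕ) (hj : 0 < j)
    (vol : Fin j → ℝ) (hvol : ∀ i, 0 < vol i)
    (M : ℕ → Matrix (Fin j) (Fin j) ℝ)
    (hMnn : ∀ n i k, 0 ≤ M n i k)
    (hMcol : ∀ n k, ∃ i, 0 < M n i k)
    (δ : ℕ → ℝ) (hδ0 : ∀ n, 0 ≤ δ n) (hδ1 : ∀ n, δ n ≤ 1)
    (hbal : ∀ n k i i', δ n * M n i k ≤ M n i' k)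
    (hdiv : ¬ Summable δ)
    (P : ℕ → ℕ → Matrix (Fin j) (Fin j) ℝ)
    (hP : ∀ n N, P n N = ((List.Ico n N).map M).prod) :
    {n | 0 < δ n}.Infinite ∧
    (∀ n, Tendsto (fun N => ∏ k ∈ Finset.Ico n N, (1 - δ k)) atTop (nhds 0)) ∧
    (∀ n, ∃ p : Fin j → ℝ,
      (⋂ N ∈ {N : ℕ | n < N},
        convexHull ℝ (Set.range fun k : Fin j => direction vol (fun i => P n N i k))) = {p}) := by
  have hprod := tendsto_prod_Ico_one_sub_of_not_summable hδ0 hδ1 hdiv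
  refine ⟨infinite_setOf_pos_of_not_summable hδ0 hdiv, hprod, fun n => ?_⟩
  have : Nonempty (Fin j) := ⟨⟨0, hj⟩⟩
  have hPsucc : ∀ m, P n (m + 1 + (n + 1)) = P n (m + (n + 1)) * M (m + (n + 1)) := fun m => by
    rw [hP, hP, add_right_comm, List.Ico.succ_top (by omega), List.map_append, List.prod_append,
      List.map_singleton, List.prod_singleton]
  have hP0 : P n (0 + (n + 1)) = M n := by
    rw [zero_add, hP, List.Ico.succ_top le_rfl, List.Ico.self_empty]
    simp
  have hprod' : Tendsto (fun m => ∏ k ∈ range m, (1 - δ (k + (n + 1)))) atTop (𝓝 0) := by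
    refine ((hprod (n + 1)).comp (tendsto_add_atTop_nat (n + 1))).congr fun m => ?_
    rw [Function.comp_apply, prod_Ico_eq_prod_range, Nat.add_sub_cancel]
    simp only [add_comm]
  obtain ⟨p, hp⟩ := exists_iInter_normalizedColumnHull_eq_singleton vol
    (A := fun m => P n (m + (n + 1))) (B := fun m => M (m + (n + 1))) hPsucc
    (fun l => hP0 ▸ dotProduct_pos_of_nonneg_of_exists_pos (fun i => hMnn n i l) (hMcol n l) hvol)
    (fun m => hMnn _) (fun m => hMcol _) (fun m => hδ1 _) (fun m => hbal _) hprod'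
  exact ⟨p, (Set.iInter_ge_eq_iInter_nat_add _ (n + 1)).trans hp⟩
end

section
/- For the sequence of matrices M_n = ((10^n, 1),(1, 10^n)), the n-fold product M_1 M_2 ⋯ M_n has eigenvalues ∏_{k=1}^n(10^k+1) and ∏_{k=1}^n(10^k-1), and the ratio of the two eigenvalues converges to α = ∏_{k=1}^∞ (10^k-1)/(10^k+1), a limit strictly between 0 and 1; consequently the normalized first column of the product converges to ((1+α)/2, (1-α)/2) and the normalized second column to ((1-α)/2, (1+α)/2), which are distinct. -/
open Finset Filter Matrix

noncomputable def M4 (n : ℕ) : Matrix (Fin 2) (Fin 2) ℝ := !![(10:ℝ)^n, 1; 1, (10:ℝ)^n]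

noncomputable def P4 (n : ℕ) : Matrix (Fin 2) (Fin 2) ℝ :=
  ((List.range n).map (fun t => M4 (t + 1))).prod

/-- Normalization of a column `(x, y)`: divide by `x + y`. -/
noncomputable def normalize2 (v : Fin 2 → ℝ) : Fin 2 → ℝ := (v 0 + v 1)⁻¹ • v

/-!
Every `M4 k` acts diagonally on the fixed vectors `(1, 1)` and `(1, -1)`, with eigenvalues
`10^k ± 1`, so `P4 n` has eigenvalues `A = ∏ (10^k + 1)` and `B = ∏ (10^k - 1)` on them and
hence entries `(A ± B) / 2`; its normalized columns are `((1 ± B / A) / 2, (1 ∓ B / A) / 2)`.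
The ratio `B / A = ∏ (1 - 2 / (10^k + 1))` decreases in `n`, and by `∏ (1 - aₖ) ≥ 1 - ∑ aₖ`
it stays above `1 - ∑ 2 / 10^k ≥ 7/9`; so it converges to some `α ∈ [7/9, 9/11]`.
-/

theorem one_sub_sum_le_prod_one_sub {ι R : Type*} [CommRing R] [LinearOrder R]
    [IsStrictOrderedRing R] (s : Finset ι) {a : ι → R} (h0 : ∀ i ∈ s, 0 ≤ a i)
    (h1 : ∀ i ∈ s, a i ≤ 1) : 1 - ∑ i ∈ s, a i ≤ ∏ i ∈ s, (1 - a i) := by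
  induction s using Finset.cons_induction with
  | empty => simp
  | cons j s hj ih =>
    simp only [mem_cons, forall_eq_or_imp] at h0 h1
    rw [prod_cons, sum_cons]
    have hs : 0 ≤ ∑ i ∈ s, a i := sum_nonneg h0.2
    have hprod : (1 - a j) * (1 - ∑ i ∈ s, a i) ≤ (1 - a j) * ∏ i ∈ s, (1 - a i) :=
      mul_le_mul_of_nonneg_left (ih h0.2 h1.2) (sub_nonneg.2 h1.1)
    nlinarith [mul_nonneg h0.1 hs]

theorem antitone_prod_Icc_of_le_one {R : Type*} [CommSemiring R] [PartialOrder R]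
    [IsOrderedRing R] {f : ℕ → R} (h0 : ∀ k, 0 ≤ f k) (h1 : ∀ k, f k ≤ 1) :
    Antitone fun n => ∏ k ∈ Icc 1 n, f k := by
  refine antitone_nat_of_succ_le fun n => ?_
  rw [prod_Icc_succ_top (by omega)]
  exact mul_le_of_le_one_right (prod_nonneg fun k _ => h0 k) (h1 _)

theorem tendsto_prod_Icc_ciInf {f : ℕ → ℝ} (h0 : ∀ k, 0 ≤ f k) (h1 : ∀ k, f k ≤ 1) :
    Tendsto (fun n => ∏ k ∈ Icc 1 n, f k) atTop (nhds (⨅ n, ∏ k ∈ Icc 1 n, f k)) :=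
  tendsto_atTop_ciInf (antitone_prod_Icc_of_le_one h0 h1)
    ⟨0, by rintro _ ⟨n, rfl⟩; exact prod_nonneg fun k _ => h0 k⟩

theorem list_prod_map_range_succ {M : Type*} [CommMonoid M] (c : ℕ → M) (n : ℕ) :
    ((List.range n).map fun t => c (t + 1)).prod = ∏ k ∈ Icc 1 n, c k := by
  rw [← Ico_add_one_right_eq_Icc, ← zero_add 1, ← prod_Ico_add', ← range_eq_Ico,
    prod_eq_multiset_prod, range_val, Multiset.range, Multiset.map_coe, Multiset.prod_coe]

theorem Matrix.list_prod_map_mulVec_eq_smul {ι R n : Type*} [CommSemiring R] [Fintype n]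
    [DecidableEq n] (A : ι → Matrix n n R) (c : ι → R) (v : n → R) (l : List ι)
    (h : ∀ i ∈ l, A i *ᵥ v = c i • v) : (l.map A).prod *ᵥ v = (l.map c).prod • v := by
  induction l with
  | nil => simp
  | cons i l ih =>
    simp only [List.mem_cons, forall_eq_or_imp] at h
    rw [List.map_cons, List.map_cons, List.prod_cons, List.prod_cons, ← mulVec_mulVec, ih h.2,
      mulVec_smul, h.1, smul_smul, mul_comm]

theorem Matrix.eq_of_mulVec_one_one_of_mulVec_one_neg_one {K : Type*} [Field K] [CharZero K]
    {P : Matrix (Fin 2) (Fin 2) K} {a b : K} (ha : P *ᵥ ![1, 1] = a • ![1, 1])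
    (hb : P *ᵥ ![1, -1] = b • ![1, -1]) :
    P = !![(a + b) / 2, (a - b) / 2; (a - b) / 2, (a + b) / 2] := by
  have ha0 := congrFun ha 0
  have ha1 := congrFun ha 1
  have hb0 := congrFun hb 0
  have hb1 := congrFun hb 1
  simp [mulVec, dotProduct, Fin.sum_univ_two] at ha0 ha1 hb0 hb1
  ext i j
  fin_cases i <;> fin_cases j <;> simp
  · linear_combination (ha0 + hb0) / 2
  · linear_combination (ha0 - hb0) / 2
  · linear_combination (ha1 + hb1) / 2
  · linear_combination (ha1 - hb1) / 2

theorem normalize2_half_add_half_sub {a b : ℝ} (ha : a ≠ 0) :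
    normalize2 ![(a + b) / 2, (a - b) / 2] = ![(1 + b / a) / 2, (1 - b / a) / 2] := by
  have hsum : (a + b) / 2 + (a - b) / 2 = a := by ring
  ext i
  fin_cases i <;> simp [normalize2, hsum] <;> field_simp

theorem normalize2_half_sub_half_add {a b : ℝ} (ha : a ≠ 0) :
    normalize2 ![(a - b) / 2, (a + b) / 2] = ![(1 - b / a) / 2, (1 + b / a) / 2] := by
  have hsum : (a - b) / 2 + (a + b) / 2 = a := by ring
  ext i
  fin_cases i <;> simp [normalize2, hsum] <;> field_simp

theorem M4_mulVec_one_one (k : ℕ) : M4 k *ᵥ ![1, 1] = ((10:ℝ)^k + 1) • ![1, 1] := by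
  ext i
  fin_cases i <;> simp [M4, mulVec, dotProduct, Fin.sum_univ_two, add_comm]

theorem M4_mulVec_one_neg_one (k : ℕ) : M4 k *ᵥ ![1, -1] = ((10:ℝ)^k - 1) • ![1, -1] := by
  ext i
  fin_cases i <;> simp [M4, mulVec, dotProduct, Fin.sum_univ_two] <;> ring

theorem P4_mulVec_eq_smul {v : Fin 2 → ℝ} {c : ℕ → ℝ} (h : ∀ k, M4 k *ᵥ v = c k • v) (n : ℕ) :
    P4 n *ᵥ v = (∏ k ∈ Icc 1 n, c k) • v := by
  rw [P4, list_prod_map_mulVec_eq_smul _ (fun t => c (t + 1)) v _ fun t _ => h (t + 1),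
    list_prod_map_range_succ]

theorem P4_eq (n : ℕ) :
    P4 n = !![((∏ k ∈ Icc 1 n, ((10:ℝ)^k + 1)) + ∏ k ∈ Icc 1 n, ((10:ℝ)^k - 1)) / 2,
      ((∏ k ∈ Icc 1 n, ((10:ℝ)^k + 1)) - ∏ k ∈ Icc 1 n, ((10:ℝ)^k - 1)) / 2;
      ((∏ k ∈ Icc 1 n, ((10:ℝ)^k + 1)) - ∏ k ∈ Icc 1 n, ((10:ℝ)^k - 1)) / 2,
      ((∏ k ∈ Icc 1 n, ((10:ℝ)^k + 1)) + ∏ k ∈ Icc 1 n, ((10:ℝ)^k - 1)) / 2] :=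
  eq_of_mulVec_one_one_of_mulVec_one_neg_one (P4_mulVec_eq_smul M4_mulVec_one_one n)
    (P4_mulVec_eq_smul M4_mulVec_one_neg_one n)

theorem normalize2_P4_col_zero (n : ℕ) :
    normalize2 (fun i => P4 n i 0) =
      ![(1 + ∏ k ∈ Icc 1 n, ((10:ℝ)^k - 1) / ((10:ℝ)^k + 1)) / 2,
        (1 - ∏ k ∈ Icc 1 n, ((10:ℝ)^k - 1) / ((10:ℝ)^k + 1)) / 2] := by
  have hA : ∏ k ∈ Icc 1 n, ((10:ℝ)^k + 1) ≠ 0 := (prod_pos fun k _ => by positivity).ne'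
  rw [P4_eq, prod_div_distrib, ← normalize2_half_add_half_sub hA]
  congr 1
  ext i
  fin_cases i <;> rfl

theorem normalize2_P4_col_one (n : ℕ) :
    normalize2 (fun i => P4 n i 1) =
      ![(1 - ∏ k ∈ Icc 1 n, ((10:ℝ)^k - 1) / ((10:ℝ)^k + 1)) / 2,
        (1 + ∏ k ∈ Icc 1 n, ((10:ℝ)^k - 1) / ((10:ℝ)^k + 1)) / 2] := by
  have hA : ∏ k ∈ Icc 1 n, ((10:ℝ)^k + 1) ≠ 0 := (prod_pos fun k _ => by positivity).ne'
  rw [P4_eq, prod_div_distrib, ← normalize2_half_sub_half_add hA]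
  congr 1
  ext i
  fin_cases i <;> rfl

theorem div_pow_ten_add_one_eq (k : ℕ) :
    ((10:ℝ)^k - 1) / ((10:ℝ)^k + 1) = 1 - 2 / ((10:ℝ)^k + 1) := by
  field_simp
  ring

theorem two_div_pow_ten_add_one_le_one (k : ℕ) : 2 / ((10:ℝ)^k + 1) ≤ 1 := by
  rw [div_le_one (by positivity)]
  linarith [one_le_pow₀ (M₀ := ℝ) (a := 10) (by norm_num) (n := k)]

theorem sum_two_div_pow_ten_add_one_le (n : ℕ) :
    ∑ k ∈ Icc 1 n, 2 / ((10:ℝ)^k + 1) ≤ 2 / 9 :=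
  calc ∑ k ∈ Icc 1 n, 2 / ((10:ℝ)^k + 1)
      ≤ 2 * ∑ k ∈ Ico 1 (n + 1), (1 / 10 : ℝ)^k := by
        rw [mul_sum, Ico_add_one_right_eq_Icc]
        refine sum_le_sum fun k _ => ?_
        rw [_root_.one_div_pow, mul_one_div]
        gcongr
        linarith
    _ ≤ 2 * ((1 / 10)^1 / (1 - 1 / 10)) := by
        gcongr
        exact geom_sum_Ico_le_of_lt_one (by norm_num) (by norm_num)
    _ = 2 / 9 := by norm_num

theorem seven_ninths_le_prod_div_pow_ten_add_one (n : ℕ) :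
    7 / 9 ≤ ∏ k ∈ Icc 1 n, ((10:ℝ)^k - 1) / ((10:ℝ)^k + 1) := by
  simp_rw [div_pow_ten_add_one_eq]
  linarith [sum_two_div_pow_ten_add_one_le n, one_sub_sum_le_prod_one_sub (Icc 1 n)
    (fun k _ => by positivity) fun k _ => two_div_pow_ten_add_one_le_one k]

theorem stmt_4 :
    ∃ α : ℝ, 0 < α ∧ α < 1 ∧
      Tendsto (fun n : ℕ => ∏ k ∈ Finset.Icc 1 n, (((10:ℝ)^k - 1) / ((10:ℝ)^k + 1)))
        atTop (nhds α) ∧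
      (∀ n : ℕ, P4 n *ᵥ ![1, 1] = (∏ k ∈ Finset.Icc 1 n, ((10:ℝ)^k + 1)) • ![1, 1]) ∧
      (∀ n : ℕ, P4 n *ᵥ ![1, -1] = (∏ k ∈ Finset.Icc 1 n, ((10:ℝ)^k - 1)) • ![1, -1]) ∧
      Tendsto (fun n : ℕ => normalize2 (fun i => P4 n i 0)) atTop
        (nhds ![(1 + α) / 2, (1 - α) / 2]) ∧
      Tendsto (fun n : ℕ => normalize2 (fun i => P4 n i 1)) atTop
        (nhds ![(1 - α) / 2, (1 + α) / 2]) ∧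
      (![(1 + α) / 2, (1 - α) / 2] : Fin 2 → ℝ) ≠ ![(1 - α) / 2, (1 + α) / 2] := by
  set p : ℕ → ℝ := fun n => ∏ k ∈ Icc 1 n, ((10:ℝ)^k - 1) / ((10:ℝ)^k + 1) with hp
  have hlim : Tendsto p atTop (nhds (⨅ n, p n)) := by
    refine tendsto_prod_Icc_ciInf (fun k => ?_) fun k => ?_ <;> rw [div_pow_ten_add_one_eq]
    · linarith [two_div_pow_ten_add_one_le_one k]
    · linarith [show 0 ≤ 2 / ((10:ℝ)^k + 1) by positivity]
  have hpos : 0 < ⨅ n, p n := (by norm_num : (0:ℝ) < 7 / 9).trans_le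
    (le_ciInf seven_ninths_le_prod_div_pow_ten_add_one)
  have hlt : ⨅ n, p n < 1 :=
    (ciInf_le ⟨0, by rintro _ ⟨n, rfl⟩; linarith [seven_ninths_le_prod_div_pow_ten_add_one n]⟩
      1).trans_lt (by norm_num [hp])
  refine ⟨⨅ n, p n, hpos, hlt, hlim, P4_mulVec_eq_smul M4_mulVec_one_one,
    P4_mulVec_eq_smul M4_mulVec_one_neg_one, ?_, ?_, fun h => ?_⟩
  · rw [funext normalize2_P4_col_zero]
    have hcont : Continuous fun x : ℝ => ![(1 + x) / 2, (1 - x) / 2] := by fun_prop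
    exact (hcont.tendsto _).comp hlim
  · rw [funext normalize2_P4_col_one]
    have hcont : Continuous fun x : ℝ => ![(1 - x) / 2, (1 + x) / 2] := by fun_prop
    exact (hcont.tendsto _).comp hlim
  · have h0 : (1 + ⨅ n, p n) / 2 = (1 - ⨅ n, p n) / 2 := congrFun h 0
    linarith
end

section
/- Let α_n = ∏_{k=1}^n (10^k-1)/(10^k+1). Then the sequence α_n is strictly decreasing, bounded below by a positive constant, and converges to a limit α satisfying 0.8 < α < 9/11. -/
open Finset Filter

private lemma fk_pos {k : ℕ} (hk : 1 ≤ k) : 0 < (((10:ℝ)^k - 1) / ((10:ℝ)^k + 1)) := by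
  have h : (10:ℝ) ≤ 10^k := by
    calc (10:ℝ) = 10^1 := (pow_one _).symm
    _ ≤ 10^k := pow_le_pow_right₀ (by norm_num) hk
  apply div_pos <;> linarith

private lemma fk_lt_one {k : ℕ} : (((10:ℝ)^k - 1) / ((10:ℝ)^k + 1)) < 1 := by
  have h : (0:ℝ) < 10^k := by positivity
  rw [div_lt_one (by linarith)]; linarith

private lemma prod_pos' (n : ℕ) : 0 < ∏ k ∈ Finset.Icc 1 n, (((10:ℝ)^k - 1) / ((10:ℝ)^k + 1)) :=
  Finset.prod_pos fun k hk => fk_pos (mem_Icc.mp hk).1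

private lemma tail_bound : ∀ n, 2 ≤ n →
    449/450 + (2/9)*(1/10:ℝ)^n ≤ ∏ k ∈ Finset.Icc 3 n, (((10:ℝ)^k - 1) / ((10:ℝ)^k + 1)) := by
  intro n hn
  induction n, hn using Nat.le_induction with
  | base => norm_num
  | succ n hn ih =>
    rw [Finset.prod_Icc_succ_top (by omega)]
    have hx : (100:ℝ) ≤ 10^n := by
      calc (100:ℝ) = 10^2 := by norm_num
      _ ≤ 10^n := pow_le_pow_right₀ (by norm_num) hn
    have hBn : (449/450 + (2/9)*(1/10:ℝ)^n) ≤ 1 := by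
      have : (1/10:ℝ)^n ≤ (1/10)^2 := pow_le_pow_of_le_one (by norm_num) (by norm_num) hn
      nlinarith
    have hf : 0 < (((10:ℝ)^(n+1) - 1) / ((10:ℝ)^(n+1) + 1)) := fk_pos (by omega)
    have key : 449/450 + (2/9)*(1/10:ℝ)^(n+1) ≤
        (449/450 + (2/9)*(1/10:ℝ)^n) * (((10:ℝ)^(n+1) - 1) / ((10:ℝ)^(n+1) + 1)) := by
      have h1 : ((1:ℝ)/10)^n = ((10:ℝ)^n)⁻¹ := by
        rw [div_pow, one_pow, one_div]
      have hinv : ((10:ℝ)^n)⁻¹ * (10:ℝ)^n = 1 := inv_mul_cancel₀ (by positivity)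
      have hd : (0:ℝ) < (10:ℝ)^(n+1) + 1 := by positivity
      rw [mul_div_assoc', le_div_iff₀ hd, pow_succ (10:ℝ) n, pow_succ ((1:ℝ)/10) n, h1]
      nlinarith [hinv, hx]
    calc 449/450 + (2/9)*(1/10:ℝ)^(n+1) ≤
        (449/450 + (2/9)*(1/10:ℝ)^n) * (((10:ℝ)^(n+1) - 1) / ((10:ℝ)^(n+1) + 1)) := key
      _ ≤ _ := by
        apply mul_le_mul_of_nonneg_right ih (le_of_lt hf)

private lemma lower_bound (n : ℕ) :
    (400059/499950 : ℝ) ≤ ∏ k ∈ Finset.Icc 1 n, (((10:ℝ)^k - 1) / ((10:ℝ)^k + 1)) := by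
  match n with
  | 0 => norm_num
  | 1 => norm_num
  | 2 =>
    rw [show Finset.Icc 1 2 = {1, 2} from rfl]
    norm_num
  | (n+3) =>
    have hsplit : (∏ k ∈ Finset.Icc 1 2, (((10:ℝ)^k - 1) / ((10:ℝ)^k + 1))) *
        (∏ k ∈ Finset.Icc 3 (n+3), (((10:ℝ)^k - 1) / ((10:ℝ)^k + 1))) =
        ∏ k ∈ Finset.Icc 1 (n+3), (((10:ℝ)^k - 1) / ((10:ℝ)^k + 1)) := by
      rw [show Finset.Icc 1 2 = Finset.Ioc 0 2 from rfl,
          show Finset.Icc 3 (n+3) = Finset.Ioc 2 (n+3) from rfl,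
          show Finset.Icc 1 (n+3) = Finset.Ioc 0 (n+3) from rfl]
      exact Finset.prod_Ioc_consecutive _ (by omega) (by omega)
    rw [← hsplit]
    have h2 : (∏ k ∈ Finset.Icc 1 2, (((10:ℝ)^k - 1) / ((10:ℝ)^k + 1))) = 891/1111 := by
      rw [show Finset.Icc 1 2 = {1, 2} from rfl]; norm_num
    rw [h2]
    have ht := tail_bound (n+3) (by omega)
    have : (449/450 : ℝ) ≤ ∏ k ∈ Finset.Icc 3 (n+3), (((10:ℝ)^k - 1) / ((10:ℝ)^k + 1)) := by
      have : (0:ℝ) ≤ (2/9)*(1/10:ℝ)^(n+3) := by positivity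
      linarith
    nlinarith

theorem stmt_5 :
    StrictAnti (fun n : ℕ => ∏ k ∈ Finset.Icc 1 n, (((10:ℝ)^k - 1) / ((10:ℝ)^k + 1))) ∧
    (∃ c : ℝ, 0 < c ∧
      ∀ n : ℕ, c ≤ ∏ k ∈ Finset.Icc 1 n, (((10:ℝ)^k - 1) / ((10:ℝ)^k + 1))) ∧
    ∃ α : ℝ, 0.8 < α ∧ α < 9 / 11 ∧
      Tendsto (fun n : ℕ => ∏ k ∈ Finset.Icc 1 n, (((10:ℝ)^k - 1) / ((10:ℝ)^k + 1)))
        atTop (nhds α) := by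
  set f : ℕ → ℝ := fun n => ∏ k ∈ Finset.Icc 1 n, (((10:ℝ)^k - 1) / ((10:ℝ)^k + 1)) with hf
  have hanti : StrictAnti f := by
    apply strictAnti_nat_of_succ_lt
    intro n
    have : f (n+1) = f n * (((10:ℝ)^(n+1) - 1) / ((10:ℝ)^(n+1) + 1)) := by
      simp only [hf]
      rw [Finset.prod_Icc_succ_top (by omega)]
    rw [this]
    have h1 := prod_pos' n
    have h2 : (((10:ℝ)^(n+1) - 1) / ((10:ℝ)^(n+1) + 1)) < 1 := fk_lt_one
    have h3 : 0 < (((10:ℝ)^(n+1) - 1) / ((10:ℝ)^(n+1) + 1)) := fk_pos (by omega)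
    calc f n * (((10:ℝ)^(n+1) - 1) / ((10:ℝ)^(n+1) + 1)) < f n * 1 := by
          exact mul_lt_mul_of_pos_left h2 h1
      _ = f n := mul_one _
  have hbdd : BddBelow (Set.range f) := by
    refine ⟨400059/499950, ?_⟩
    rintro x ⟨n, rfl⟩
    exact lower_bound n
  refine ⟨hanti, ⟨400059/499950, by norm_num, lower_bound⟩, ⟨⨅ n, f n, ?_, ?_, ?_⟩⟩
  · have h := le_ciInf lower_bound
    have : (0.8:ℝ) < 400059/499950 := by norm_num
    linarith
  · have h2 : f 2 = 891/1111 := by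
      simp only [hf]
      rw [show Finset.Icc 1 2 = {1, 2} from rfl]; norm_num
    have := ciInf_le hbdd 2
    rw [h2] at this
    calc (⨅ n, f n) ≤ 891/1111 := this
      _ < 9/11 := by norm_num
  · exact tendsto_atTop_ciInf hanti.antitone hbdd
end

section
/- Suppose in a one-dimensional constant-length fusion with J tile species, coincidence with waiting k, and all n-supertiles consisting of at most C·J subtiles of level n−1, any two k-supertiles agree on at least one tile. Then any two nk-supertiles agree on at least a fraction 1 − ((C^k J^k − 1)/(C^k J^k))^n of their tiles, and this fraction tends to 1 as n → ∞. -/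
open Finset Filter

/-! Count disagreements rather than agreements, and put `D = (CJ)^k`, `ρ = (D - 1) / D`.
A level-`(n+1)k` supertile is a word of `L ≤ D` level-`nk` supertiles of length `N`, and the
number of disagreeing tiles of two such words is the sum over the corresponding pairs of
sub-blocks. Coincidence makes one pair identical, so by induction the count is at most
`(L - 1) ρⁿ N ≤ ρⁿ⁺¹ L N`, the last step being `L - 1 ≤ ρ L`, i.e. `L ≤ D`. -/

section Hamming

variable {ι κ α : Type*} [Fintype ι] [Fintype κ] [DecidableEq α]

theorem hammingDist_comp_equiv {ι' : Type*} [Fintype ι'] (e : ι' ≃ ι) (x y : ι → α) :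
    hammingDist (x ∘ e) (y ∘ e) = hammingDist x y :=
  Finset.card_equiv e (by simp)

theorem hammingDist_prod_eq_sum (x y : ι × κ → α) :
    hammingDist x y = ∑ i, hammingDist (fun j => x (i, j)) (fun j => y (i, j)) := by
  simp only [hammingDist, Finset.card_filter, Fintype.sum_prod_type]

theorem card_filter_add_hammingDist (x y : ι → α) :
    #{i | x i = y i} + hammingDist x y = Fintype.card ι :=
  card_filter_add_card_filter_not _

end Hamming

theorem natCast_sub_one_le_sub_one_div_mul {L D : ℕ} (h : L ≤ D) :
    (L : ℝ) - 1 ≤ ((D : ℝ) - 1) / D * L := by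
  rcases Nat.eq_zero_or_pos L with rfl | hL
  · simp
  have hD : (0 : ℝ) < D := by exact_mod_cast hL.trans_le h
  have hLD : (L : ℝ) / D ≤ 1 := (div_le_one hD).2 (by exact_mod_cast h)
  rw [sub_div, div_self hD.ne', sub_mul, one_mul, div_mul_eq_mul_div, one_mul]
  linarith

theorem sub_one_div_natCast_nonneg (D : ℕ) : 0 ≤ ((D : ℝ) - 1) / D := by
  rcases Nat.eq_zero_or_pos D with rfl | hD
  · simp
  have : (1 : ℝ) ≤ D := by exact_mod_cast hD
  exact div_nonneg (by linarith) D.cast_nonneg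

theorem sub_one_div_natCast_lt_one (D : ℕ) : ((D : ℝ) - 1) / D < 1 := by
  rcases Nat.eq_zero_or_pos D with rfl | hD
  · simp
  rw [div_lt_one (by exact_mod_cast hD)]
  linarith

section Hierarchy

def LengthMultiplicative (relLen : ℕ → ℕ → ℕ) : Prop :=
  ∀ m n p, m ≤ n → n ≤ p → relLen m p = relLen m n * relLen n p

theorem relLen_le_pow {relLen : ℕ → ℕ → ℕ} {K : ℕ} (hlen : ∀ n, relLen n (n + 1) ≤ K)
    (hmul : LengthMultiplicative relLen) (m j : ℕ) :
    relLen m (m + j) ≤ K ^ j := by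
  induction j with
  | zero =>
    have h := hmul m m m le_rfl le_rfl
    simp only [add_zero, pow_zero]
    nlinarith
  | succ j ih =>
    rw [← add_assoc, hmul m (m + j) (m + j + 1) (by omega) (by omega), pow_succ]
    exact Nat.mul_le_mul ih (hlen _)

variable {A : ℕ → Type} {relLen : ℕ → ℕ → ℕ} (blocks : ∀ m n : ℕ, A n → Fin (relLen m n) → A m)

def BlocksCompose : Prop :=
  ∀ m n p, m ≤ n → n ≤ p → ∀ (a : A p) (q : Fin (relLen n p)) (r : Fin (relLen m n))
    (h : (q : ℕ) * relLen m n + (r : ℕ) < relLen m p),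
    blocks m p a ⟨(q : ℕ) * relLen m n + (r : ℕ), h⟩ = blocks m n (blocks n p a q) r

def HasCoincidence (k : ℕ) : Prop :=
  ∀ m, ∀ a b : A (m + k), ∃ i : Fin (relLen m (m + k)),
    blocks m (m + k) a i = blocks m (m + k) b i

theorem hammingDist_blocks_eq_sum
    (hmul : LengthMultiplicative relLen)
    (hcomp : BlocksCompose blocks)
    {m n p : ℕ} [DecidableEq (A m)] (hmn : m ≤ n) (hnp : n ≤ p) (a b : A p) :
    hammingDist (blocks m p a) (blocks m p b) =
      ∑ q, hammingDist (blocks m n (blocks n p a q)) (blocks m n (blocks n p b q)) := by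
  let e : Fin (relLen n p) × Fin (relLen m n) ≃ Fin (relLen m p) :=
    finProdFinEquiv.trans (finCongr (by rw [hmul m n p hmn hnp, mul_comm]))
  have he_val : ∀ qr, (e qr : ℕ) = qr.1 * relLen m n + qr.2 := fun qr => by
    simp [e, finProdFinEquiv]; ring
  have he : ∀ x : A p, blocks m p x ∘ e = fun qr => blocks m n (blocks n p x qr.1) qr.2 := by
    intro x
    funext qr
    rw [Function.comp_apply, ← hcomp m n p hmn hnp x qr.1 qr.2 (he_val qr ▸ (e qr).isLt)]
    exact congrArg _ (Fin.ext (he_val qr))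
  rw [← hammingDist_comp_equiv e, he a, he b, hammingDist_prod_eq_sum]

theorem hammingDist_blocks_le_pow
    (hmul : LengthMultiplicative relLen)
    (hcomp : BlocksCompose blocks)
    {k : ℕ} (hcoinc : HasCoincidence blocks k)
    {ρ : ℝ} (hρ : 0 ≤ ρ) (hstep : ∀ m, (relLen m (m + k) : ℝ) - 1 ≤ ρ * relLen m (m + k))
    (m : ℕ) [DecidableEq (A m)] (n : ℕ) {p : ℕ} (hp : p = m + n * k) (a b : A p) :
    (hammingDist (blocks m p a) (blocks m p b) : ℝ) ≤ ρ ^ n * relLen m p := by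
  induction n generalizing p with
  | zero =>
    rw [pow_zero, one_mul]
    exact_mod_cast hammingDist_le_card_fintype.trans (Fintype.card_fin _).le
  | succ n ih =>
    obtain rfl : p = m + n * k + k := by rw [hp]; ring
    obtain ⟨i₀, hi₀⟩ := hcoinc (m + n * k) a b
    have hL : 1 ≤ relLen (m + n * k) (m + n * k + k) := i₀.pos
    rw [hammingDist_blocks_eq_sum blocks hmul hcomp (n := m + n * k) (by omega) (by omega),
      Nat.cast_sum, ← add_sum_erase _ _ (mem_univ i₀), hi₀, hammingDist_self, Nat.cast_zero,
      zero_add]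
    calc _ ≤ ∑ i ∈ univ.erase i₀, ρ ^ n * relLen m (m + n * k) :=
          sum_le_sum fun i _ => ih rfl _ _
      _ = ((relLen (m + n * k) (m + n * k + k) : ℝ) - 1) * (ρ ^ n * relLen m (m + n * k)) := by
        rw [sum_const, card_erase_of_mem (mem_univ _), card_univ, Fintype.card_fin,
          nsmul_eq_mul, Nat.cast_sub hL, Nat.cast_one]
      _ ≤ ρ * relLen (m + n * k) (m + n * k + k) * (ρ ^ n * relLen m (m + n * k)) := by
        gcongr
        exact hstep _
      _ = ρ ^ (n + 1) * relLen m (m + n * k + k) := by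
        rw [hmul m (m + n * k) (m + n * k + k) (by omega) (by omega), Nat.cast_mul]
        ring

theorem le_card_filter_blocks_eq
    (hmul : LengthMultiplicative relLen)
    (hcomp : BlocksCompose blocks)
    {k : ℕ} (hcoinc : HasCoincidence blocks k)
    {ρ : ℝ} (hρ : 0 ≤ ρ) (hstep : ∀ m, (relLen m (m + k) : ℝ) - 1 ≤ ρ * relLen m (m + k))
    (m : ℕ) [DecidableEq (A m)] (n : ℕ) {p : ℕ} (hp : p = m + n * k) (a b : A p) :
    (1 - ρ ^ n) * relLen m p ≤ (#{i | blocks m p a i = blocks m p b i} : ℝ) := by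
  have hsplit : (#{i | blocks m p a i = blocks m p b i} : ℝ) +
      hammingDist (blocks m p a) (blocks m p b) = relLen m p := by
    exact_mod_cast (card_filter_add_hammingDist (blocks m p a) (blocks m p b)).trans
      (Fintype.card_fin _)
  have hdist := hammingDist_blocks_le_pow blocks hmul hcomp hcoinc hρ hstep m n hp a b
  linarith

end Hierarchy

theorem stmt_6_general (J C k : ℕ)
    (A : ℕ → Type) [DecidableEq (A 0)]
    (relLen : ℕ → ℕ → ℕ)
    (blocks : ∀ m n : ℕ, A n → Fin (relLen m n) → A m)
    (hlen : ∀ n, relLen n (n + 1) ≤ C * J)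
    (hmul : ∀ m n p, m ≤ n → n ≤ p → relLen m p = relLen m n * relLen n p)
    (hcomp : ∀ m n p, m ≤ n → n ≤ p → ∀ (a : A p) (q : Fin (relLen n p)) (r : Fin (relLen m n))
      (h : (q : ℕ) * relLen m n + (r : ℕ) < relLen m p),
      blocks m p a ⟨(q : ℕ) * relLen m n + (r : ℕ), h⟩ = blocks m n (blocks n p a q) r)
    (hcoinc : ∀ m, ∀ a b : A (m + k), ∃ i : Fin (relLen m (m + k)),
      blocks m (m + k) a i = blocks m (m + k) b i) :
    (∀ n : ℕ, 1 ≤ n → ∀ a b : A (n * k),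
      (1 - (((C:ℝ)^k * (J:ℝ)^k - 1) / ((C:ℝ)^k * (J:ℝ)^k))^n) * relLen 0 (n * k) ≤
        ((Finset.univ.filter (fun i : Fin (relLen 0 (n * k)) =>
          blocks 0 (n * k) a i = blocks 0 (n * k) b i)).card : ℝ)) ∧
    Tendsto (fun n : ℕ => 1 - (((C:ℝ)^k * (J:ℝ)^k - 1) / ((C:ℝ)^k * (J:ℝ)^k))^n)
      atTop (nhds 1) := by
  have hD : (((C * J) ^ k : ℕ) : ℝ) = (C : ℝ) ^ k * (J : ℝ) ^ k := by push_cast; ring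
  simp only [← hD]
  have hρ := sub_one_div_natCast_nonneg ((C * J) ^ k)
  have hstep (m : ℕ) := natCast_sub_one_le_sub_one_div_mul (relLen_le_pow hlen hmul m k)
  refine ⟨fun n _ a b => ?_, ?_⟩
  · exact le_card_filter_blocks_eq blocks hmul hcomp hcoinc hρ hstep 0 n (zero_add _).symm a b
  · simpa only [sub_zero] using
      (tendsto_pow_atTop_nhds_zero_of_lt_one hρ (sub_one_div_natCast_lt_one _)).const_sub 1

theorem stmt_6 (J C k : ℕ) (hJ : 1 ≤ J) (hC : 1 ≤ C) (hk : 1 ≤ k)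
    (A : ℕ → Type) [DecidableEq (A 0)]
    (relLen : ℕ → ℕ → ℕ)
    (blocks : ∀ m n : ℕ, A n → Fin (relLen m n) → A m)
    (hpos : ∀ m n, m ≤ n → 0 < relLen m n)
    (hlen : ∀ n, relLen n (n + 1) ≤ C * J)
    (hmul : ∀ m n p, m ≤ n → n ≤ p → relLen m p = relLen m n * relLen n p)
    (hcomp : ∀ m n p, m ≤ n → n ≤ p → ∀ (a : A p) (q : Fin (relLen n p)) (r : Fin (relLen m n))
      (h : (q : ℕ) * relLen m n + (r : ℕ) < relLen m p),
      blocks m p a ⟨(q : ℕ) * relLen m n + (r : ℕ), h⟩ = blocks m n (blocks n p a q) r)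
    (hcoinc : ∀ m, ∀ a b : A (m + k), ∃ i : Fin (relLen m (m + k)),
      blocks m (m + k) a i = blocks m (m + k) b i) :
    (∀ n : ℕ, 1 ≤ n → ∀ a b : A (n * k),
      (1 - (((C:ℝ)^k * (J:ℝ)^k - 1) / ((C:ℝ)^k * (J:ℝ)^k))^n) * relLen 0 (n * k) ≤
        ((Finset.univ.filter (fun i : Fin (relLen 0 (n * k)) =>
          blocks 0 (n * k) a i = blocks 0 (n * k) b i)).card : ℝ)) ∧
    Tendsto (fun n : ℕ => 1 - (((C:ℝ)^k * (J:ℝ)^k - 1) / ((C:ℝ)^k * (J:ℝ)^k))^n)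
      atTop (nhds 1) :=
  stmt_6_general J C k A relLen blocks hlen hmul hcomp hcoinc
end

section
/- In a strongly primitive fusion rule, if x and y are corresponding points in two n-supertiles of the same type lying within a common N-supertile (N ≥ n+2), then the displacement y − x can be written as a sum ∑_{k=n}^{N−2} v_k where each v_k is a return vector in V^k, the set of relative positions of two k-supertiles of the same type within a common (k+2)-supertile. -/
open Finset

theorem stmt_15 (d : ℕ)
    (A : ℕ → Type)
    (occ : (m N : ℕ) → A N → Set (A m × EuclideanSpace ℝ (Fin d)))
    (hself : ∀ n (t : A n), (t, (0 : EuclideanSpace ℝ (Fin d))) ∈ occ n n t)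
    (hcomp : ∀ m n p : ℕ, m ≤ n → n ≤ p → ∀ (t : A p) (u : A n) (s : A m)
      (x y : EuclideanSpace ℝ (Fin d)),
      (u, x) ∈ occ n p t → (s, y) ∈ occ m n u → (s, x + y) ∈ occ m p t)
    (hfactor : ∀ m N : ℕ, m ≤ N → ∀ (t : A (N + 1)) (s : A m)
      (z : EuclideanSpace ℝ (Fin d)), (s, z) ∈ occ m (N + 1) t →
      ∃ (u : A N) (x y : EuclideanSpace ℝ (Fin d)),
        (u, x) ∈ occ N (N + 1) t ∧ (s, y) ∈ occ m N u ∧ z = x + y)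
    (hprim : ∀ n (t : A (n + 1)) (s : A n),
      ∃ x : EuclideanSpace ℝ (Fin d), (s, x) ∈ occ n (n + 1) t) :
    ∀ n N : ℕ, n + 2 ≤ N → ∀ (t : A N) (s : A n) (x y : EuclideanSpace ℝ (Fin d)),
      (s, x) ∈ occ n N t → (s, y) ∈ occ n N t →
      ∃ v : ℕ → EuclideanSpace ℝ (Fin d),
        (∀ k ∈ Finset.Icc n (N - 2),
          v k ∈ {w : EuclideanSpace ℝ (Fin d) |
            ∃ (t' : A (k + 2)) (s' : A k) (x' y' : EuclideanSpace ℝ (Fin d)),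
              (s', x') ∈ occ k (k + 2) t' ∧ (s', y') ∈ occ k (k + 2) t' ∧ w = y' - x'}) ∧
        y - x = ∑ k ∈ Finset.Icc n (N - 2), v k := by

  intro n N hN t s x y hx hy
  induction N, hN using Nat.le_induction generalizing s x y with
  | base =>
    refine ⟨fun _ => y - x, ?_, ?_⟩
    · intro k hk
      simp only [Finset.mem_Icc] at hk
      have hkn : k = n := by omega
      subst hkn
      exact ⟨t, s, x, y, hx, hy, rfl⟩
    · rw [show n + 2 - 2 = n from by omega, Finset.Icc_self, Finset.sum_singleton]
  | succ N hN IH =>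
    obtain ⟨M, rfl⟩ : ∃ M, N = M + 2 := ⟨N - 2, by omega⟩
    obtain ⟨u₁, a₁, b₁, h1, h2, hx'⟩ := hfactor n (M + 2) (by omega) t s x hx
    obtain ⟨u₂, a₂, b₂, h3, h4, hb₁⟩ := hfactor n (M + 1) (by omega) u₁ s b₁ h2
    obtain ⟨u, c, e, h5, h6, hy'⟩ := hfactor n (M + 2) (by omega) t s y hy
    obtain ⟨f, h7⟩ := hprim (M + 1) u u₂
    have h8 : (s, f + b₂) ∈ occ n (M + 2) u :=
      hcomp n (M + 1) (M + 2) (by omega) (by omega) u u₂ s f b₂ h7 h4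
    obtain ⟨v, hv1, hv2⟩ := IH u s (f + b₂) e h8 h6
    refine ⟨fun k => if k = M + 1 then (c + f) - (a₁ + a₂) else v k, ?_, ?_⟩
    · intro k hk
      simp only [Finset.mem_Icc] at hk
      by_cases hkM : k = M + 1
      · subst hkM
        simp only [if_pos rfl]
        exact ⟨t, u₂, a₁ + a₂, c + f,
          hcomp (M + 1) (M + 2) (M + 3) (by omega) (by omega) t u₁ u₂ a₁ a₂ h1 h3,
          hcomp (M + 1) (M + 2) (M + 3) (by omega) (by omega) t u u₂ c f h5 h7, rfl⟩
      · simp only [if_neg hkM]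
        exact hv1 k (Finset.mem_Icc.mpr ⟨hk.1, by omega⟩)
    · have he : M + 2 + 1 - 2 = M + 1 := by omega
      rw [he, Finset.sum_Icc_succ_top (by omega : n ≤ M + 1)]
      rw [if_pos rfl]
      have hc : ∑ k ∈ Finset.Icc n M,
          (if k = M + 1 then (c + f) - (a₁ + a₂) else v k) = ∑ k ∈ Finset.Icc n M, v k := by
        apply Finset.sum_congr rfl
        intro k hk
        rw [Finset.mem_Icc] at hk
        rw [if_neg (by omega)]
      rw [hc]
      have he2 : M + 2 - 2 = M := by omega
      rw [he2] at hv2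
      rw [← hv2]
      subst hx' hy' hb₁
      module
end
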